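/- On the open set {sin θ ≠ 0} of ℝ⁸ with coordinates (t,r,θ,φ,ṫ,ṙ,θ̇,φ̇), define the vector fields δ_θ := ∂_θ − cot θ·φ̇·∂̇_φ and δ_φ := ∂_φ + sin θ cos θ·φ̇·∂̇_θ − cot θ·θ̇·∂̇_φ. Then the bracket B := [δ_θ, δ_φ] equals −sin²θ·φ̇·∂̇_θ + θ̇·∂̇_φ, and both iterated Lie brackets [δ_θ, B] and [δ_φ, B] are pointwise scalar multiples of B: at every point p there exist scalars λ(p), μ(p) ∈ ℝ with [δ_θ, B](p) = λ(p)·B(p) and [δ_φ, B](p) = μ(p)·B(p). -/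

import Mathlib

noncomputable section

/-- Points of `ℝ⁸` with coordinates `(t,r,θ,φ,ṫ,ṙ,θ̇,φ̇)`. -/
abbrev Pt : Type := Fin 8 → ℝ

/-- `δ_θ := ∂_θ − cot θ · φ̇ · ∂̇_φ`. -/
def δθ (p : Pt) : Pt :=
  Pi.single (2 : Fin 8) 1 - Pi.single (7 : Fin 8) (Real.cos (p 2) / Real.sin (p 2) * p 7)

/-- `δ_φ := ∂_φ + sin θ cos θ · φ̇ · ∂̇_θ − cot θ · θ̇ · ∂̇_φ`. -/
def δφ (p : Pt) : Pt :=
  Pi.single (3 : Fin 8) 1 + Pi.single (6 : Fin 8) (Real.sin (p 2) * Real.cos (p 2) * p 7)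
    - Pi.single (7 : Fin 8) (Real.cos (p 2) / Real.sin (p 2) * p 6)

/-- `B := −sin²θ · φ̇ · ∂̇_θ + θ̇ · ∂̇_φ`. -/
def Bvf (p : Pt) : Pt :=
  Pi.single (6 : Fin 8) (-Real.sin (p 2) ^ 2 * p 7) + Pi.single (7 : Fin 8) (p 6)

/-- Lie bracket of vector fields on `ℝ⁸`. -/
def lie (X Y : Pt → Pt) (p : Pt) : Pt :=
  fderiv ℝ Y p (X p) - fderiv ℝ X p (Y p)

/-
Each field is a constant field plus coordinate fields `∂̇_j` with coefficients `g(θ) · q_j`, so its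
derivative can be written down explicitly; the brackets then reduce to trigonometric identities,
and in fact `[δ_θ, B] = cot θ · B` and `[δ_φ, B] = 0`.
-/

open Real ContinuousLinearMap

theorem HasFDerivAt.piSingle {𝕜 ι E F : Type*} [NontriviallyNormedField 𝕜] [Fintype ι]
    [DecidableEq ι] [NormedAddCommGroup E] [NormedSpace 𝕜 E] [NormedAddCommGroup F]
    [NormedSpace 𝕜 F] {f : E → F} {f' : E →L[𝕜] F} {p : E} (hf : HasFDerivAt f f' p) (j : ι) :
    HasFDerivAt (fun q => Pi.single j (f q)) ((single 𝕜 (fun _ : ι => F) j).comp f') p :=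
  (single 𝕜 (fun _ : ι => F) j).hasFDerivAt.comp p hf

theorem hasFDerivAt_comp_apply_mul_apply {𝕜 ι : Type*} [NontriviallyNormedField 𝕜] [Fintype ι]
    {g : 𝕜 → 𝕜} {g' : 𝕜} {p : ι → 𝕜} {i : ι} (hg : HasDerivAt g g' (p i)) (j : ι) :
    HasFDerivAt (fun q : ι → 𝕜 => g (q i) * q j)
      ((g' * p j) • (proj i : (ι → 𝕜) →L[𝕜] 𝕜) + g (p i) • proj j) p := by
  refine ((hg.comp_hasFDerivAt p (hasFDerivAt_apply i p)).mul
    (hasFDerivAt_apply j p)).congr_fderiv ?_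
  ext v
  simp only [Function.comp_apply, add_apply, smul_apply, proj_apply, smul_eq_mul]
  ring

theorem hasDerivAt_cos_div_sin {x : ℝ} (hx : sin x ≠ 0) :
    HasDerivAt (fun x => cos x / sin x) (-(sin x ^ 2)⁻¹) x := by
  refine ((hasDerivAt_cos x).div (hasDerivAt_sin x) hx).congr_deriv ?_
  field_simp
  linear_combination -sin_sq_add_cos_sq x

theorem hasDerivAt_sin_mul_cos (x : ℝ) :
    HasDerivAt (fun x => sin x * cos x) (cos x ^ 2 - sin x ^ 2) x := by
  refine ((hasDerivAt_sin x).mul (hasDerivAt_cos x)).congr_deriv ?_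
  ring

theorem hasDerivAt_neg_sin_sq (x : ℝ) :
    HasDerivAt (fun x => -sin x ^ 2) (-(2 * sin x * cos x)) x := by
  refine ((hasDerivAt_sin x).pow 2).neg.congr_deriv ?_
  ring

section

variable {p : Pt}

theorem fderiv_δθ_apply (hp : sin (p 2) ≠ 0) (v : Pt) :
    fderiv ℝ δθ p v =
      -Pi.single 7 (-(sin (p 2) ^ 2)⁻¹ * p 7 * v 2 + cos (p 2) / sin (p 2) * v 7) := by
  have h : HasFDerivAt δθ _ p :=
    ((hasFDerivAt_comp_apply_mul_apply (hasDerivAt_cos_div_sin hp) 7).piSingle 7).const_sub _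
  rw [h.fderiv]
  rfl

theorem fderiv_δφ_apply (hp : sin (p 2) ≠ 0) (v : Pt) :
    fderiv ℝ δφ p v =
      Pi.single 6 ((cos (p 2) ^ 2 - sin (p 2) ^ 2) * p 7 * v 2 + sin (p 2) * cos (p 2) * v 7)
        - Pi.single 7 (-(sin (p 2) ^ 2)⁻¹ * p 6 * v 2 + cos (p 2) / sin (p 2) * v 6) := by
  have h : HasFDerivAt δφ _ p :=
    (((hasFDerivAt_comp_apply_mul_apply (hasDerivAt_sin_mul_cos (p 2)) 7).piSingle 6).const_add _).sub
      ((hasFDerivAt_comp_apply_mul_apply (hasDerivAt_cos_div_sin hp) 6).piSingle 7)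
  rw [h.fderiv]
  rfl

theorem fderiv_Bvf_apply (v : Pt) :
    fderiv ℝ Bvf p v =
      Pi.single 6 (-((2 : ℝ) * sin (p 2) * cos (p 2)) * p 7 * v 2 + -sin (p 2) ^ 2 * v 7)
        + Pi.single 7 (v 6) := by
  have h : HasFDerivAt Bvf _ p :=
    ((hasFDerivAt_comp_apply_mul_apply (hasDerivAt_neg_sin_sq (p 2)) 7).piSingle 6).add
      ((hasFDerivAt_apply 6 p).piSingle 7)
  rw [h.fderiv]
  rfl

theorem lie_δθ_δφ (hp : sin (p 2) ≠ 0) : lie δθ δφ p = Bvf p := by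
  ext i
  simp only [lie, fderiv_δθ_apply hp, fderiv_δφ_apply hp]
  fin_cases i <;> simp [δθ, δφ, Bvf]
  · field_simp
    ring
  · field_simp
    linear_combination -p 6 * sin_sq_add_cos_sq (p 2)

theorem lie_δθ_Bvf (hp : sin (p 2) ≠ 0) : lie δθ Bvf p = (cos (p 2) / sin (p 2)) • Bvf p := by
  ext i
  simp only [lie, fderiv_δθ_apply hp, fderiv_Bvf_apply]
  fin_cases i <;> simp [δθ, Bvf]
  field_simp
  ring

theorem lie_δφ_Bvf (hp : sin (p 2) ≠ 0) : lie δφ Bvf p = 0 := by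
  ext i
  simp only [lie, fderiv_δφ_apply hp, fderiv_Bvf_apply]
  fin_cases i <;> simp [δφ, Bvf] <;> field_simp <;> ring

end

/-- bracket computation in Lemma 4.7, Class 4. On `{sin θ ≠ 0}`,
`[δ_θ, δ_φ] = B = −sin²θ·φ̇·∂̇_θ + θ̇·∂̇_φ`, and both iterated brackets `[δ_θ, B]` and
`[δ_φ, B]` are pointwise scalar multiples of `B`. -/
theorem statement_14 :
    ∀ p : Pt, Real.sin (p 2) ≠ 0 →
      lie δθ δφ p = Bvf p ∧
      (∃ lam : ℝ, lie δθ Bvf p = lam • Bvf p) ∧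
      (∃ mu : ℝ, lie δφ Bvf p = mu • Bvf p) :=
  fun _ hp => ⟨lie_δθ_δφ hp, ⟨_, lie_δθ_Bvf hp⟩, ⟨0, by rw [lie_δφ_Bvf hp, zero_smul]⟩⟩

end
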